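/- With 𝒴(t) = 1 + Σ_{n≥1} y_n t^n, the series log 𝒴(t) is primitive for the quasi-shuffle coproduct, and its coefficient of t^n equals π₁(y_n) = y_n + Σ_{l≥2} ((-1)^{l-1}/l) Σ_{j_1+...+j_l = n, j_i ≥ 1} y_{j_1}···y_{j_l}. -/

import Mathlib

/-!
Write `Y = 𝒴(t)`. Since `y₀ = 1`, the coefficient of `tⁿ` in `(Y - 1)ʲ` is the sum of the words
`y_{j₁} ⋯ y_{jⱼ}` over the compositions of `n` into `j` parts, and grouping the terms of `log Y`
by the number of parts gives `π₁(y_n)`.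

For primitivity, `Δ_⊛ y_n = ∑_{i+j=n} y_i ⊗ y_j` (with `y₀ = 1`) says that `Δ_⊛ Y` is the product
of `Y ⊗ 1` and `1 ⊗ Y`, two series whose coefficients commute with each other. Substituting a
series without constant term into a power series with rational coefficients is a ring morphism
compatible with composition, even over a noncommutative ℚ-algebra, so the identities
`exp (log (1 + X)) = 1 + X` and `log (exp X) = X` of `ℚ⟦X⟧` (proved with derivatives) make `exp`
and `log` inverse to each other over any ℚ-algebra. Together with `exp (u + v) = exp u * exp v`
for commuting `u`, `v`, this gives `log (L R) = log L + log R`, hence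
`Δ_⊛ (log Y) = log Y ⊗ 1 + 1 ⊗ log Y`.
-/

open scoped TensorProduct
open Finset

noncomputable section

/-- The alphabet `Y = {y_n : n ≥ 1}` and words over it. -/
abbrev Word : Type := FreeMonoid ℕ+

/-- `k⟨Y⟩`, the span of the words over `Y`, with the concatenation product. -/
abbrev QSh (k : Type) [CommRing k] : Type := MonoidAlgebra k Word

/-- The letter `y_n` viewed in `k⟨Y⟩`, with the convention `y_0 = 1`. -/
def yy (k : Type) [CommRing k] (n : ℕ) : QSh k :=
  if h : 0 < n then MonoidAlgebra.of k Word (FreeMonoid.of (⟨n, h⟩ : ℕ+)) else 1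

/-- The quasi-shuffle (stuffle) product of two words, with values in `k⟨Y⟩`:
`1 ⊛ v = v`, `u ⊛ 1 = u`, and
`(y_a u) ⊛ (y_b v) = y_a (u ⊛ y_b v) + y_b (y_a u ⊛ v) + y_{a+b} (u ⊛ v)`. -/
def stuffleAux (k : Type) [CommRing k] : List ℕ+ → List ℕ+ → QSh k
  | [], v => MonoidAlgebra.of k Word (FreeMonoid.ofList v)
  | a :: u, [] => MonoidAlgebra.of k Word (FreeMonoid.ofList (a :: u))
  | a :: u, b :: v =>
      MonoidAlgebra.of k Word (FreeMonoid.of a) * stuffleAux k u (b :: v)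
    + MonoidAlgebra.of k Word (FreeMonoid.of b) * stuffleAux k (a :: u) v
    + MonoidAlgebra.of k Word (FreeMonoid.of (a + b)) * stuffleAux k u v
  termination_by u v => u.length + v.length
  decreasing_by all_goals (simp; try omega)

/-- The quasi-shuffle coproduct `Δ_⊛`, the algebra morphism (for concatenation) with
`Δ_⊛ y_n = y_n ⊗ 1 + 1 ⊗ y_n + Σ_{i+j=n, i,j ≥ 1} y_i ⊗ y_j`. -/
def Δstuf (k : Type) [CommRing k] [Algebra ℚ k] : QSh k →ₐ[k] (QSh k ⊗[k] QSh k) :=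
  MonoidAlgebra.lift (R := k) (M := Word) (A := QSh k ⊗[k] QSh k)
    (FreeMonoid.lift fun n : ℕ+ =>
      (yy k n) ⊗ₜ 1 + 1 ⊗ₜ (yy k n)
      + ∑ p ∈ Finset.HasAntidiagonal.antidiagonal (n : ℕ),
          if 0 < p.1 ∧ 0 < p.2 then (yy k p.1) ⊗ₜ[k] (yy k p.2) else 0)

/-- Scalar action of a rational `c` on an element of a `k`-module, through `algebraMap ℚ k`. -/
def qsmul (k : Type) [CommRing k] [Algebra ℚ k] {M : Type} [AddCommGroup M] [Module k M]
    (c : ℚ) (x : M) : M := (algebraMap ℚ k c) • x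

/-- The generating series `𝒴(t) = 1 + Σ_{n ≥ 1} y_n t^n ∈ k⟨Y⟩[[t]]`. -/
def Yser (k : Type) [CommRing k] [Algebra ℚ k] : PowerSeries (QSh k) :=
  PowerSeries.mk (yy k)

/-- `log 𝒴(t) = Σ_{j ≥ 1} (-1)^{j-1} (𝒴(t) - 1)^j / j`, which makes sense coefficientwise
since `𝒴(t) - 1` has zero constant term. -/
def logY (k : Type) [CommRing k] [Algebra ℚ k] : PowerSeries (QSh k) :=
  PowerSeries.mk fun n => ∑ j ∈ Finset.Icc 1 n,
    qsmul k ((-1 : ℚ) ^ (j - 1) / j) (PowerSeries.coeff (R := QSh k) n ((Yser k - 1) ^ j))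

/-- The word `y_{j_1} ⋯ y_{j_l}` attached to a list `(j_1, …, j_l)` of positive integers. -/
def wordOf (k : Type) [CommRing k] (L : List ℕ) : QSh k := (L.map (yy k)).prod

/-- `π₁(y_n) = y_n + Σ_{l ≥ 2} ((-1)^{l-1}/l) Σ_{j_1+⋯+j_l = n, j_i ≥ 1} y_{j_1} ⋯ y_{j_l}`. -/
def pi1 (k : Type) [CommRing k] [Algebra ℚ k] (n : ℕ) : QSh k :=
  yy k n + ∑ c ∈ Finset.univ.filter (fun c : Composition n => 2 ≤ c.length),
    qsmul k ((-1 : ℚ) ^ (c.length - 1) / c.length) (wordOf k c.blocks)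


theorem Composition.sum_length_succ_eq_sum_cons {M : Type*} [AddCommMonoid M] (n j : ℕ)
    (f : List ℕ → M) :
    ∑ c : Composition n with c.length = j + 1, f c.blocks =
      ∑ p ∈ antidiagonal n with 0 < p.1,
        ∑ c : Composition p.2 with c.length = j, f (p.1 :: c.blocks) := by
  rw [sum_sigma']
  symm
  refine sum_bij (fun x hx => ⟨x.1.1 :: x.2.blocks, ?_, ?_⟩) ?_ ?_ ?_ ?_
  · simp only [mem_sigma, mem_filter, HasAntidiagonal.mem_antidiagonal, mem_univ, true_and] at hx
    intro i hi
    rcases List.mem_cons.mp hi with rfl | hi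
    exacts [hx.1.2, x.2.blocks_pos hi]
  · simp only [mem_sigma, mem_filter, HasAntidiagonal.mem_antidiagonal, mem_univ, true_and] at hx
    rw [List.sum_cons, x.2.blocks_sum, hx.1.1]
  · rintro ⟨⟨p, q⟩, c⟩ hx
    simp only [mem_sigma, mem_filter, HasAntidiagonal.mem_antidiagonal, mem_univ, true_and] at hx
    simp [Composition.length, hx.2]
  · rintro ⟨⟨p, q⟩, c⟩ hx ⟨⟨p', q'⟩, c'⟩ hx' h
    simp only [mem_sigma, mem_filter, HasAntidiagonal.mem_antidiagonal, mem_univ, true_and]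
      at hx hx'
    simp only [Composition.mk.injEq, List.cons.injEq] at h
    obtain rfl := h.1
    obtain rfl : q = q' := by omega
    obtain rfl := Composition.ext h.2
    rfl
  · intro c hc
    simp only [mem_filter, mem_univ, true_and] at hc
    obtain ⟨p, L, hpL⟩ : ∃ p L, c.blocks = p :: L :=
      List.exists_cons_of_length_eq_add_one (c.blocks_length.trans hc)
    have hsum := c.blocks_sum
    have hlen := c.blocks_length
    rw [hpL, List.sum_cons] at hsum
    rw [hpL, List.length_cons] at hlen
    refine ⟨⟨(p, L.sum), ⟨L, fun hi => c.blocks_pos (hpL ▸ List.mem_cons_of_mem p hi), rfl⟩⟩,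
      ?_, Composition.ext hpL.symm⟩
    simp only [mem_sigma, mem_filter, HasAntidiagonal.mem_antidiagonal, mem_univ, true_and]
    exact ⟨⟨hsum, c.blocks_pos (hpL ▸ List.mem_cons_self)⟩,
      by simp only [Composition.length]; omega⟩
  · intros
    rfl

theorem Finset.sum_range_sum_antidiagonal_eq_sum_range_sum_range {M : Type*} [AddCommMonoid M]
    {N : ℕ} (f : ℕ → ℕ → M) (hf : ∀ i j, N ≤ i + j → f i j = 0) :
    ∑ m ∈ range N, ∑ p ∈ antidiagonal m, f p.1 p.2 = ∑ i ∈ range N, ∑ j ∈ range N, f i j := by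
  set S := (range N ×ˢ range N).filter fun p => p.1 + p.2 < N
  calc ∑ m ∈ range N, ∑ p ∈ antidiagonal m, f p.1 p.2
      = ∑ m ∈ range N, ∑ p ∈ S with p.1 + p.2 = m, f p.1 p.2 := by
        refine sum_congr rfl fun m hm => sum_congr ?_ fun _ _ => rfl
        ext ⟨i, j⟩
        simp only [mem_range] at hm
        simp only [S, HasAntidiagonal.mem_antidiagonal, mem_filter, mem_product, mem_range]
        omega
    _ = ∑ p ∈ S, f p.1 p.2 := sum_fiberwise_of_maps_to (by simp [S]) _
    _ = ∑ p ∈ range N ×ˢ range N, f p.1 p.2 :=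
        sum_filter_of_ne fun p _ hp => by by_contra h; exact hp (hf _ _ (by omega))
    _ = ∑ i ∈ range N, ∑ j ∈ range N, f i j := sum_product' _ _ _

namespace PowerSeries

theorem coeff_pow_eq_zero_of_lt {R : Type*} [Semiring R] {u : R⟦X⟧} (hu : constantCoeff u = 0)
    {n j : ℕ} (h : n < j) : coeff n (u ^ j) = 0 :=
  coeff_of_lt_order n ((Nat.cast_lt.mpr h).trans_le (le_order_pow_of_constantCoeff_eq_zero j hu))

theorem coeff_mul_congr {R : Type*} [Semiring R] {f f' g g' : R⟦X⟧} {n : ℕ}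
    (hf : ∀ i ≤ n, coeff i f = coeff i f') (hg : ∀ i ≤ n, coeff i g = coeff i g') :
    coeff n (f * g) = coeff n (f' * g') := by
  rw [coeff_mul, coeff_mul]
  refine sum_congr rfl fun p hp => ?_
  rw [hf p.1 (Nat.lt_succ_iff.mp (Finset.Nat.antidiagonal.fst_lt hp)),
    hg p.2 (Nat.lt_succ_iff.mp (Finset.Nat.antidiagonal.snd_lt hp))]

theorem coeff_pow_mul_pow_eq_zero_of_lt {R : Type*} [Semiring R] {u v : R⟦X⟧}
    (hu : constantCoeff u = 0) (hv : constantCoeff v = 0) {n i j : ℕ} (h : n < i + j) :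
    coeff n (u ^ i * v ^ j) = 0 := by
  refine coeff_of_lt_order n ?_
  calc (n : ℕ∞) < (i + j : ℕ) := by exact_mod_cast h
    _ ≤ (u ^ i).order + (v ^ j).order := by
      push_cast
      exact add_le_add (le_order_pow_of_constantCoeff_eq_zero i hu)
        (le_order_pow_of_constantCoeff_eq_zero j hv)
    _ ≤ (u ^ i * v ^ j).order := le_order_mul _ _

theorem commute_map_map {R S : Type*} [Semiring R] [Semiring S] {f g : R →+* S}
    (hfg : ∀ a b, Commute (f a) (g b)) (φ ψ : R⟦X⟧) : Commute (map f φ) (map g ψ) := by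
  ext n
  rw [coeff_mul, coeff_mul, ← Finset.Nat.sum_antidiagonal_swap]
  refine sum_congr rfl fun p _ => ?_
  simp only [Prod.fst_swap, Prod.snd_swap, coeff_map]
  exact (hfg _ _).eq

theorem subst_one {R : Type*} [CommRing R] {a : R⟦X⟧} (ha : HasSubst a) :
    (1 : R⟦X⟧).subst a = 1 := by
  rw [← coe_substAlgHom ha, map_one]

theorem subst_eq_X_of_subst_eq_X {R : Type*} [CommRing R] {f g : R⟦X⟧}
    (hf : constantCoeff f = 0) (hg : constantCoeff g = 0) (hf1 : IsUnit (coeff 1 f))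
    (h : f.subst g = X) : g.subst f = X := by
  have hg' := HasSubst.of_constantCoeff_zero' hg
  have hgQ : g = f.substInvOfIsUnit hf1 := by
    have := subst_comp_subst_apply (HasSubst.of_constantCoeff_zero' hf) hg'
      (f.substInvOfIsUnit hf1)
    rwa [subst_substInvOfIsUnit_left f hf hf1, subst_X hg', h, X_subst] at this
  rw [hgQ, subst_substInvOfIsUnit_left f hf hf1]

theorem one_add_X_mul_derivative_log : (1 + X) * d⁄dX ℚ (log ℚ) = 1 := by
  ext n
  rw [deriv_log, add_mul, one_mul, map_add]
  cases n with
  | zero => simp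
  | succ n => simp [pow_succ]

theorem log_subst_exp_sub_one : (log ℚ).subst (exp ℚ - 1) = X := by
  have hE : HasSubst (exp ℚ - 1) := HasSubst.exp_sub_one
  apply derivative.ext
  · have h := congrArg (subst (exp ℚ - 1)) one_add_X_mul_derivative_log
    rw [subst_mul hE, subst_add hE, subst_X hE, subst_one hE, add_sub_cancel] at h
    rw [derivative_subst hE, map_sub, derivative_exp, derivative_one, sub_zero, mul_comm, h,
      derivative_X]
  · rw [constantCoeff_eq, constantCoeff_subst_eq_zero
      (by rw [← constantCoeff_eq, map_sub, constantCoeff_exp, map_one, sub_self]) _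
      constantCoeff_log]
    simp

theorem exp_subst_log : (exp ℚ).subst (log ℚ) = 1 + X := by
  have h := subst_eq_X_of_subst_eq_X constantCoeff_log (by simp [constantCoeff_exp])
    (by simp) log_subst_exp_sub_one
  rw [subst_sub HasSubst.log, subst_one HasSubst.log, sub_eq_iff_eq_add] at h
  rw [h, add_comm]

theorem coeff_exp_add_mul_choose (i j : ℕ) :
    coeff (i + j) (exp ℚ) * (i + j).choose i = coeff i (exp ℚ) * coeff j (exp ℚ) := by
  simp only [coeff_exp, one_div, eq_ratCast, Rat.cast_id]
  have := Nat.add_choose_mul_factorial_mul_factorial i j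
  rw [← Nat.choose_symm_add] at this
  field_simp
  exact_mod_cast this

theorem _root_.Commute.coeff_exp_smul_add_pow {A : Type*} [Ring A] [Algebra ℚ A] {a b : A}
    (h : Commute a b) (m : ℕ) :
    coeff m (exp ℚ) • (a + b) ^ m =
      ∑ p ∈ antidiagonal m, (coeff p.1 (exp ℚ) * coeff p.2 (exp ℚ)) • (a ^ p.1 * b ^ p.2) := by
  rw [h.add_pow', smul_sum]
  refine sum_congr rfl fun p hp => ?_
  rw [← HasAntidiagonal.mem_antidiagonal.mp hp, ← Nat.cast_smul_eq_nsmul ℚ, smul_smul,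
    coeff_exp_add_mul_choose]

section NCSubst

variable {R A : Type*} [CommRing R] [Ring A] [Algebra R A] {u : A⟦X⟧}

theorem coeff_aeval_eq_of_X_pow_dvd_sub (hu : constantCoeff u = 0) {p q : Polynomial R}
    {N n : ℕ} (hpq : Polynomial.X ^ N ∣ p - q) (hn : n < N) :
    coeff n (Polynomial.aeval u p) = coeff n (Polynomial.aeval u q) := by
  obtain ⟨r, hr⟩ := hpq
  rw [← sub_eq_zero, ← map_sub, ← map_sub, hr, Polynomial.X_pow_mul, map_mul, map_pow,
    Polynomial.aeval_X]
  exact coeff_mul_of_lt_order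
    ((Nat.cast_lt.mpr hn).trans_le (le_order_pow_of_constantCoeff_eq_zero N hu))

/-- `F(u) = ∑ⱼ Fⱼ uʲ` for `u` with coefficients in a possibly noncommutative `R`-algebra. When
`u` has no constant term, the terms with `j > n` do not contribute to the coefficient of `Xⁿ`,
so it is read off the polynomial truncation of `F` evaluated at `u`. -/
def ncSubst (u : A⟦X⟧) (F : R⟦X⟧) : A⟦X⟧ :=
  mk fun n => coeff n (Polynomial.aeval u (trunc (n + 1) F))

theorem coeff_ncSubst (hu : constantCoeff u = 0) (F : R⟦X⟧) {n N : ℕ} (hn : n < N) :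
    coeff n (ncSubst u F) = coeff n (Polynomial.aeval u (trunc N F)) := by
  rw [ncSubst, coeff_mk]
  refine coeff_aeval_eq_of_X_pow_dvd_sub hu (Polynomial.X_pow_dvd_iff.mpr fun d hd => ?_)
    n.lt_succ_self
  simp only [Polynomial.coeff_sub, coeff_trunc, if_pos hd, if_pos (hd.trans_le hn), sub_self]

theorem trunc_ncSubst (hu : constantCoeff u = 0) (F : R⟦X⟧) (N : ℕ) :
    trunc N (ncSubst u F) = trunc N (Polynomial.aeval u (trunc N F)) := by
  ext d
  simp only [coeff_trunc]
  split_ifs with hd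
  exacts [coeff_ncSubst hu F hd, rfl]

theorem coeff_ncSubst_eq_sum (hu : constantCoeff u = 0) (F : R⟦X⟧) {n N : ℕ} (hn : n < N) :
    coeff n (ncSubst u F) = ∑ j ∈ range N, coeff j F • coeff n (u ^ j) := by
  obtain ⟨M, rfl⟩ : ∃ M, N = M + 1 := ⟨N - 1, by omega⟩
  rw [coeff_ncSubst hu F hn, Polynomial.aeval_eq_sum_range' (natDegree_trunc_lt F M), map_sum]
  refine sum_congr rfl fun j hj => ?_
  rw [coeff_trunc, if_pos (mem_range.mp hj), coeff_smul]

theorem ncSubst_add (F G : R⟦X⟧) : ncSubst u (F + G) = ncSubst u F + ncSubst u G := by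
  ext n
  simp [ncSubst]

theorem ncSubst_mul (hu : constantCoeff u = 0) (F G : R⟦X⟧) :
    ncSubst u (F * G) = ncSubst u F * ncSubst u G := by
  ext n
  have htrunc : Polynomial.X ^ (n + 1) ∣
      trunc (n + 1) (F * G) - trunc (n + 1) F * trunc (n + 1) G := by
    refine Polynomial.X_pow_dvd_iff.mpr fun d hd => ?_
    rw [Polynomial.coeff_sub, coeff_trunc, if_pos hd, ← Polynomial.coeff_coe, Polynomial.coe_mul,
      ← coeff_mul_eq_coeff_trunc_mul_trunc _ _ hd, sub_self]
  rw [coeff_ncSubst hu _ n.lt_succ_self, coeff_aeval_eq_of_X_pow_dvd_sub hu htrunc n.lt_succ_self,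
    map_mul]
  exact coeff_mul_congr (fun i hi => (coeff_ncSubst hu F (Nat.lt_succ_of_le hi)).symm)
    (fun i hi => (coeff_ncSubst hu G (Nat.lt_succ_of_le hi)).symm)

theorem ncSubst_C (r : R) : ncSubst u (C r) = C (algebraMap R A r) := by
  ext n
  rw [ncSubst, coeff_mk, trunc_C, Polynomial.aeval_C, algebraMap_apply]

theorem ncSubst_one : ncSubst u (1 : R⟦X⟧) = 1 := by
  rw [← map_one C, ncSubst_C, map_one, map_one]

theorem ncSubst_zero : ncSubst u (0 : R⟦X⟧) = 0 := by
  rw [← map_zero C, ncSubst_C, map_zero, map_zero]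

theorem ncSubst_X (hu : constantCoeff u = 0) : ncSubst u (X : R⟦X⟧) = u := by
  ext n
  rw [coeff_ncSubst hu X (by omega : n < n + 2), trunc_X, Polynomial.aeval_X]

def ncSubstAlgHom (hu : constantCoeff u = 0) : R⟦X⟧ →ₐ[R] A⟦X⟧ where
  toFun := ncSubst u
  map_one' := ncSubst_one
  map_mul' := ncSubst_mul hu
  map_zero' := ncSubst_zero
  map_add' := ncSubst_add
  commutes' r := by
    rw [algebraMap_apply, Algebra.algebraMap_self_apply, ncSubst_C, algebraMap_apply]

theorem ncSubstAlgHom_apply (hu : constantCoeff u = 0) (F : R⟦X⟧) :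
    ncSubstAlgHom hu F = ncSubst u F := rfl

theorem constantCoeff_ncSubst (hu : constantCoeff u = 0) (F : R⟦X⟧) :
    constantCoeff (ncSubst u F) = algebraMap R A (constantCoeff F) := by
  rw [← coeff_zero_eq_constantCoeff_apply, coeff_ncSubst_eq_sum hu F zero_lt_one]
  simp [Algebra.algebraMap_eq_smul_one]

theorem map_ncSubst {B : Type*} [Ring B] [Algebra R B] (f : A →ₐ[R] B) (u : A⟦X⟧) (F : R⟦X⟧) :
    map (f : A →+* B) (ncSubst u F) = ncSubst (map (f : A →+* B) u) F := by
  ext n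
  rw [coeff_map, ncSubst, ncSubst, coeff_mk, coeff_mk, ← coeff_map, ← mapAlgHom_apply,
    ← Polynomial.aeval_algHom_apply, mapAlgHom_apply]

theorem ncSubst_ncSubst (hu : constantCoeff u = 0) {G : R⟦X⟧} (hG : constantCoeff G = 0)
    (F : R⟦X⟧) : ncSubst (ncSubst u G) F = ncSubst u (ncSubst G F) := by
  have hv : constantCoeff (ncSubst u G) = 0 := by
    rw [constantCoeff_ncSubst hu, hG, map_zero]
  ext n
  rw [coeff_ncSubst hv F n.lt_succ_self, ← ncSubstAlgHom_apply hu G, Polynomial.aeval_algHom_apply,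
    ncSubstAlgHom_apply, coeff_ncSubst hu _ n.lt_succ_self, coeff_ncSubst hu _ n.lt_succ_self,
    trunc_ncSubst hG]

theorem ncSubst_eq_subst {S : Type*} [CommRing S] [Algebra R S] {a : S⟦X⟧}
    (ha : constantCoeff a = 0) (F : R⟦X⟧) : ncSubst a F = F.subst a := by
  ext n
  rw [coeff_ncSubst_eq_sum ha F n.lt_succ_self, coeff_subst' (HasSubst.of_constantCoeff_zero' ha),
    finsum_eq_sum_of_support_subset _ (s := range (n + 1)) fun d hd => ?_]
  by_contra h
  simp only [coe_range, Set.mem_Iio, not_lt] at h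
  exact hd (by simp only [coeff_pow_eq_zero_of_lt ha (by omega : n < d), smul_zero])

end NCSubst

section NCExpLog

variable {A : Type*} [Ring A] [Algebra ℚ A]

def ncExp (u : A⟦X⟧) : A⟦X⟧ := ncSubst u (exp ℚ)

def ncLog (φ : A⟦X⟧) : A⟦X⟧ := ncSubst (φ - 1) (log ℚ)

theorem constantCoeff_ncLog {φ : A⟦X⟧} (hφ : constantCoeff φ = 1) :
    constantCoeff (ncLog φ) = 0 := by
  rw [ncLog, constantCoeff_ncSubst (by rw [map_sub, hφ, map_one, sub_self]), constantCoeff_log,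
    map_zero]

theorem map_ncLog {B : Type*} [Ring B] [Algebra ℚ B] (f : A →+* B) (φ : A⟦X⟧) :
    map f (ncLog φ) = ncLog (map f φ) := by
  rw [ncLog, ncLog, ← RingHom.toRatAlgHom_toRingHom f, map_ncSubst, map_sub, map_one]

theorem ncExp_ncLog {φ : A⟦X⟧} (hφ : constantCoeff φ = 1) : ncExp (ncLog φ) = φ := by
  have hu : constantCoeff (φ - 1) = 0 := by rw [map_sub, hφ, map_one, sub_self]
  rw [ncExp, ncLog, ncSubst_ncSubst hu constantCoeff_log, ncSubst_eq_subst constantCoeff_log,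
    exp_subst_log, ← ncSubstAlgHom_apply hu, map_add, map_one, ncSubstAlgHom_apply, ncSubst_X hu,
    add_sub_cancel]

theorem ncLog_ncExp {u : A⟦X⟧} (hu : constantCoeff u = 0) : ncLog (ncExp u) = u := by
  have hE : constantCoeff (exp ℚ - 1) = 0 := by
    rw [map_sub, constantCoeff_exp, map_one, sub_self]
  have : ncExp u - 1 = ncSubst u (exp ℚ - 1) := by
    rw [← ncSubstAlgHom_apply hu, map_sub, map_one, ncSubstAlgHom_apply, ncExp]
  rw [ncLog, this, ncSubst_ncSubst hu hE, ncSubst_eq_subst hE, log_subst_exp_sub_one,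
    ncSubst_X hu]

theorem ncExp_add {u v : A⟦X⟧} (hu : constantCoeff u = 0) (hv : constantCoeff v = 0)
    (huv : Commute u v) : ncExp (u + v) = ncExp u * ncExp v := by
  ext n
  have htrunc (w : A⟦X⟧) (hw : constantCoeff w = 0) : ∀ i ≤ n, coeff i (ncExp w) =
      coeff i (∑ m ∈ range (n + 1), coeff m (exp ℚ) • w ^ m) := fun i hi => by
    rw [ncExp, coeff_ncSubst_eq_sum hw _ (Nat.lt_succ_of_le hi), map_sum]
    simp only [coeff_smul]
  calc coeff n (ncExp (u + v))
      = coeff n (∑ m ∈ range (n + 1), coeff m (exp ℚ) • (u + v) ^ m) :=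
        htrunc _ (by rw [map_add, hu, hv, add_zero]) n le_rfl
    _ = ∑ m ∈ range (n + 1), ∑ p ∈ antidiagonal m,
          (coeff p.1 (exp ℚ) * coeff p.2 (exp ℚ)) • coeff n (u ^ p.1 * v ^ p.2) := by
        simp_rw [huv.coeff_exp_smul_add_pow, map_sum, coeff_smul]
    _ = ∑ i ∈ range (n + 1), ∑ j ∈ range (n + 1),
          (coeff i (exp ℚ) * coeff j (exp ℚ)) • coeff n (u ^ i * v ^ j) :=
        sum_range_sum_antidiagonal_eq_sum_range_sum_range
          (fun i j => (coeff i (exp ℚ) * coeff j (exp ℚ)) • coeff n (u ^ i * v ^ j))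
          fun i j hij => by rw [coeff_pow_mul_pow_eq_zero_of_lt hu hv (by omega), smul_zero]
    _ = coeff n ((∑ i ∈ range (n + 1), coeff i (exp ℚ) • u ^ i) *
          ∑ j ∈ range (n + 1), coeff j (exp ℚ) • v ^ j) := by
        simp_rw [sum_mul_sum, smul_mul_smul_comm, map_sum, coeff_smul]
    _ = coeff n (ncExp u * ncExp v) := (coeff_mul_congr (htrunc u hu) (htrunc v hv)).symm

theorem ncLog_mul {L R : A⟦X⟧} (hL : constantCoeff L = 1) (hR : constantCoeff R = 1)
    (h : Commute (ncLog L) (ncLog R)) : ncLog (L * R) = ncLog L + ncLog R := by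
  have hl := constantCoeff_ncLog hL
  have hr := constantCoeff_ncLog hR
  calc ncLog (L * R) = ncLog (ncExp (ncLog L) * ncExp (ncLog R)) := by
        rw [ncExp_ncLog hL, ncExp_ncLog hR]
    _ = ncLog (ncExp (ncLog L + ncLog R)) := by rw [ncExp_add hl hr h]
    _ = ncLog L + ncLog R := ncLog_ncExp (by rw [map_add, hl, hr, add_zero])

end NCExpLog

end PowerSeries

namespace QuasiShuffle

open PowerSeries

variable (k : Type) [CommRing k]

theorem yy_zero : yy k 0 = 1 := by simp [yy]

theorem wordOf_cons (a : ℕ) (L : List ℕ) : wordOf k (a :: L) = yy k a * wordOf k L := by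
  simp [wordOf]

variable [Algebra ℚ k]

theorem constantCoeff_Yser : constantCoeff (Yser k) = 1 := by
  simp [← coeff_zero_eq_constantCoeff_apply, Yser, yy_zero]

theorem coeff_Yser_sub_one (p : ℕ) :
    coeff p (Yser k - 1) = if p = 0 then 0 else yy k p := by
  split_ifs with hp
  · simp [hp, Yser, yy_zero]
  · simp [Yser, coeff_one, hp]

theorem coeff_pow_Yser_sub_one (j n : ℕ) :
    coeff n ((Yser k - 1) ^ j) = ∑ c : Composition n with c.length = j, wordOf k c.blocks := by
  induction j generalizing n with
  | zero =>
    rw [pow_zero, coeff_one]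
    split_ifs with hn
    · subst hn
      rw [sum_eq_single_of_mem (Composition.ones 0) (by simp) fun c _ hc =>
        (hc (Composition.ext (by simp [Composition.blocks_eq_nil]))).elim]
      simp [wordOf]
    · refine (sum_eq_zero fun c hc => ?_).symm
      simp only [mem_filter, mem_univ, true_and] at hc
      exact absurd (c.length_pos_iff.mpr (Nat.pos_of_ne_zero hn)) (by omega)
  | succ j ih =>
    rw [Composition.sum_length_succ_eq_sum_cons, sum_filter, pow_succ', coeff_mul]
    refine sum_congr rfl fun p _ => ?_
    rw [coeff_Yser_sub_one, ih]
    split_ifs with h0 h0'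
    · omega
    · rw [zero_mul]
    · simp_rw [wordOf_cons, mul_sum]
    · omega

theorem coeff_logY (n : ℕ) (hn : 1 ≤ n) : coeff n (logY k) = pi1 k n := by
  have hlen (c : Composition n) : c.length ∈ Icc 1 n :=
    mem_Icc.mpr ⟨c.length_pos_iff.mpr hn, c.length_le⟩
  have hshort : (univ.filter fun c : Composition n => ¬ 2 ≤ c.length) =
      {Composition.single n hn} := by
    ext c
    have := mem_Icc.mp (hlen c)
    simp only [mem_filter, mem_univ, true_and, mem_singleton, Composition.eq_single_iff_length]
    omega
  calc coeff n (logY k)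
      = ∑ j ∈ Icc 1 n, ∑ c : Composition n with c.length = j,
          qsmul k ((-1) ^ (c.length - 1) / c.length) (wordOf k c.blocks) := by
        rw [logY, coeff_mk]
        refine sum_congr rfl fun j _ => ?_
        rw [coeff_pow_Yser_sub_one, qsmul, smul_sum]
        refine sum_congr rfl fun c hc => ?_
        rw [(mem_filter.mp hc).2, qsmul]
    _ = ∑ c : Composition n, qsmul k ((-1) ^ (c.length - 1) / c.length) (wordOf k c.blocks) :=
        sum_fiberwise_of_maps_to (fun c _ => hlen c) _
    _ = pi1 k n := by
        rw [pi1, ← sum_filter_add_sum_filter_not univ (fun c => 2 ≤ c.length), hshort,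
          sum_singleton, Composition.single_length, Composition.single_blocks, add_comm]
        simp [qsmul, wordOf]

theorem logY_eq_ncLog : logY k = ncLog (Yser k) := by
  have hY : constantCoeff (Yser k - 1) = 0 := by
    rw [map_sub, constantCoeff_Yser, map_one, sub_self]
  refine PowerSeries.ext fun n => ?_
  have hsub : Icc 1 n ⊆ range (n + 1) := fun j hj => by
    simp only [mem_Icc, mem_range] at hj ⊢
    omega
  rw [logY, coeff_mk, ncLog, coeff_ncSubst_eq_sum hY _ n.lt_succ_self,
    ← sum_subset hsub fun j _ hj => ?_]
  · refine sum_congr rfl fun j hj => ?_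
    obtain ⟨i, rfl⟩ : ∃ i, j = i + 1 := ⟨j - 1, by simp only [mem_Icc] at hj; omega⟩
    simp [qsmul, pow_succ]
  · obtain rfl : j = 0 := by simp only [mem_Icc, mem_range, not_and, not_le] at *; omega
    simp

theorem Δstuf_yy (n : ℕ) :
    Δstuf k (yy k n) = ∑ p ∈ antidiagonal n, yy k p.1 ⊗ₜ[k] yy k p.2 := by
  rcases Nat.eq_zero_or_pos n with rfl | hn
  · simp [yy_zero, Algebra.TensorProduct.one_def]
  have hends : (antidiagonal n).filter (fun p => ¬(0 < p.1 ∧ 0 < p.2)) = {(0, n), (n, 0)} := by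
    ext ⟨a, b⟩
    simp only [mem_filter, HasAntidiagonal.mem_antidiagonal, mem_insert, mem_singleton,
      Prod.mk.injEq]
    omega
  rw [← sum_filter_add_sum_filter_not _ (fun p => 0 < p.1 ∧ 0 < p.2), hends,
    sum_pair (by simp only [ne_eq, Prod.mk.injEq]; omega)]
  calc Δstuf k (yy k n) = Δstuf k (MonoidAlgebra.of k Word (FreeMonoid.of (⟨n, hn⟩ : ℕ+))) := by
        rw [yy, dif_pos hn]
    _ = _ := by
        rw [Δstuf, MonoidAlgebra.lift_of]
        erw [FreeMonoid.lift_eval_of]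
        rw [sum_filter]
        simp only [PNat.mk_coe, yy_zero]
        abel

abbrev inclLeft : QSh k →+* QSh k ⊗[k] QSh k := Algebra.TensorProduct.includeLeftRingHom

abbrev inclRight : QSh k →+* QSh k ⊗[k] QSh k := Algebra.TensorProduct.includeRight.toRingHom

theorem map_Δstuf_Yser : map (Δstuf k : QSh k →+* QSh k ⊗[k] QSh k) (Yser k) =
    map (inclLeft k) (Yser k) * map (inclRight k) (Yser k) := by
  ext n
  simp only [coeff_map, coeff_mul, Yser, coeff_mk, Δstuf_yy, AlgHom.toRingHom_eq_coe,
    RingHom.coe_coe, Algebra.TensorProduct.includeLeftRingHom_apply,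
    Algebra.TensorProduct.includeRight_apply, Algebra.TensorProduct.tmul_mul_tmul, mul_one,
    one_mul]

theorem map_Δstuf_logY : map (Δstuf k : QSh k →+* QSh k ⊗[k] QSh k) (logY k) =
    map (inclLeft k) (logY k) + map (inclRight k) (logY k) := by
  have hY (f : QSh k →+* QSh k ⊗[k] QSh k) : constantCoeff (map f (Yser k)) = 1 :=
    (congrArg f (constantCoeff_Yser k)).trans (map_one f)
  have hcomm :
      Commute (ncLog (map (inclLeft k) (Yser k))) (ncLog (map (inclRight k) (Yser k))) := by
    rw [← map_ncLog, ← map_ncLog]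
    exact commute_map_map (fun a b => by
      simp [Commute, SemiconjBy, Algebra.TensorProduct.tmul_mul_tmul]) _ _
  rw [logY_eq_ncLog, map_ncLog, map_ncLog, map_ncLog, map_Δstuf_Yser,
    ncLog_mul (hY _) (hY _) hcomm]

end QuasiShuffle

/-- the coefficient of `t^n` in `log 𝒴(t)` equals
`π₁(y_n) = y_n + Σ_{l ≥ 2} ((-1)^{l-1}/l) Σ_{j_1+⋯+j_l=n} y_{j_1}⋯y_{j_l}`, and
`log 𝒴(t)` is primitive for the quasi-shuffle coproduct. -/
theorem logY_coeff_and_primitive (k : Type) [CommRing k] [Algebra ℚ k] :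
    (∀ n : ℕ, 1 ≤ n → PowerSeries.coeff (R := QSh k) n (logY k) = pi1 k n) ∧
    (∀ n : ℕ, 1 ≤ n →
      Δstuf k (PowerSeries.coeff (R := QSh k) n (logY k))
        = (PowerSeries.coeff (R := QSh k) n (logY k)) ⊗ₜ[k] 1
          + 1 ⊗ₜ[k] (PowerSeries.coeff (R := QSh k) n (logY k))) := by
  refine ⟨QuasiShuffle.coeff_logY k, fun n _ => ?_⟩
  simpa using congrArg (PowerSeries.coeff n) (QuasiShuffle.map_Δstuf_logY k)

end
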